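/- arXiv:2103.07253 — 4 statements merged into one kernel-verified Lean document; each statement's English description precedes it below -/
import Mathlib

section
/- Let a > 0, γ > 1, and let 0 < r₁ ≤ r₂. Then there exists a constant c > 0 such that for every r ∈ [r₁, r₂] and every ρ ≥ 2 r₂, the relative entropy satisfies E(ρ|r) = H(ρ) − H(r) − H′(r)(ρ − r) ≥ c (1 + ρ^γ). -/
open Real

/-- Convexity inequality: for `0 < x ≤ y` and `1 ≤ γ`,
`x^γ + γ x^(γ-1) (y - x) ≤ y^γ`. -/
lemma bern_aux {γ x y : ℝ} (hγ : 1 ≤ γ) (hx : 0 < x) (hxy : x ≤ y) :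
    x ^ γ + γ * x ^ (γ - 1) * (y - x) ≤ y ^ γ := by
  set s : ℝ := y / x - 1 with hs_def
  have hy : 0 < y := hx.trans_le hxy
  have hs : -1 ≤ s := by
    have : 0 ≤ y / x := le_of_lt (div_pos hy hx)
    simp only [hs_def]; linarith
  have hb := one_add_mul_self_le_rpow_one_add hs hγ
  have h1s : 1 + s = y / x := by simp [hs_def]
  rw [h1s] at hb
  have hxpow : (0:ℝ) < x ^ γ := rpow_pos_of_pos hx γ
  have hdiv : (y / x) ^ γ = y ^ γ / x ^ γ := div_rpow hy.le hx.le γ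
  have key : (1 + γ * s) * x ^ γ ≤ y ^ γ := by
    calc (1 + γ * s) * x ^ γ ≤ (y / x) ^ γ * x ^ γ := by
          exact mul_le_mul_of_nonneg_right hb hxpow.le
      _ = y ^ γ := by rw [hdiv]; field_simp
  have hxpow1 : x ^ (γ - 1) * x = x ^ γ := by
    rw [← rpow_add_one hx.ne']; ring_nf
  calc x ^ γ + γ * x ^ (γ - 1) * (y - x)
      = x ^ γ + γ * (x ^ (γ - 1) * x) * ((y - x) / x) := by
        field_simp
    _ = (1 + γ * s) * x ^ γ := by
        rw [hxpow1]; simp only [hs_def]; field_simp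
    _ ≤ y ^ γ := key

/-- For `r ∈ [r₁, r₂]` and `ρ ≥ 2 r₂`, the relative entropy
`E(ρ|r) = H(ρ) - H(r) - H'(r)(ρ - r)` dominates `c (1 + ρ^γ)` for some `c > 0`. -/
theorem stmt3 (a γ r₁ r₂ : ℝ) (ha : 0 < a) (hγ : 1 < γ)
    (hr₁ : 0 < r₁) (hr₁₂ : r₁ ≤ r₂)
    (H : ℝ → ℝ) (hH : ∀ ρ : ℝ, H ρ = a * ρ ^ γ / (γ - 1)) :
    ∃ c > 0, ∀ r ∈ Set.Icc r₁ r₂, ∀ ρ : ℝ, 2 * r₂ ≤ ρ →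
      c * (1 + ρ ^ γ) ≤ H ρ - H r - (a * γ * r ^ (γ - 1) / (γ - 1)) * (ρ - r) := by
  have hγ0 : 0 < γ - 1 := by linarith
  -- δ = 1 - (1+γ)/2^γ > 0 by strict Bernoulli
  have h2γ : (1:ℝ) + γ < 2 ^ γ := by
    have := one_add_mul_self_lt_rpow_one_add (s := 1) (by norm_num) (by norm_num) hγ
    norm_num at this
    linarith
  have h2pos : (0:ℝ) < 2 ^ γ := rpow_pos_of_pos (by norm_num) γ
  set δ : ℝ := 1 - (1 + γ) / 2 ^ γ with hδ_def
  have hδpos : 0 < δ := by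
    have : (1 + γ) / 2 ^ γ < 1 := (div_lt_one h2pos).mpr h2γ
    simp only [hδ_def]; linarith
  set K : ℝ := (2 * r₁) ^ γ with hK_def
  have hKpos : 0 < K := rpow_pos_of_pos (by linarith) γ
  refine ⟨a * δ / (γ - 1) * (K / (K + 1)), by positivity, ?_⟩
  rintro r ⟨hr₁r, hrr₂⟩ ρ hρ
  have hrpos : 0 < r := hr₁.trans_le hr₁r
  have hr2pos : 0 < r₂ := hr₁.trans_le hr₁₂
  have hρpos : 0 < ρ := by linarith
  set m : ℝ := ρ / 2 with hm_def
  have hmpos : 0 < m := by positivity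
  have hrm : r ≤ m := by simp only [hm_def]; linarith
  have hmρ : m ≤ ρ := by simp only [hm_def]; linarith
  -- B ≥ 0
  have hB := bern_aux hγ.le hrpos hrm
  -- C ≥ 0
  have hC : γ * r ^ (γ - 1) * (ρ - m) ≤ γ * m ^ (γ - 1) * (ρ - m) := by
    have : r ^ (γ - 1) ≤ m ^ (γ - 1) := rpow_le_rpow hrpos.le hrm hγ0.le
    have hρm : 0 ≤ ρ - m := by linarith
    have hx := mul_nonneg (by linarith : (0:ℝ) ≤ γ)
      (mul_nonneg (sub_nonneg.mpr this) hρm)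
    nlinarith [hx]
  -- A = δ ρ^γ
  have hmγ : m ^ γ = ρ ^ γ / 2 ^ γ := by
    rw [hm_def, div_rpow hρpos.le (by norm_num)]
  have hmγ1 : m ^ (γ - 1) * m = m ^ γ := by
    rw [← rpow_add_one hmpos.ne']; ring_nf
  have hA : ρ ^ γ - m ^ γ - γ * m ^ (γ - 1) * (ρ - m) = δ * ρ ^ γ := by
    have hρm2 : ρ - m = m := by simp [hm_def]; ring
    rw [hρm2]
    have : γ * m ^ (γ - 1) * m = γ * m ^ γ := by rw [mul_assoc, hmγ1]
    rw [this, hmγ, hδ_def]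
    field_simp
    ring
  -- core bound
  have hcore : δ * ρ ^ γ ≤ ρ ^ γ - r ^ γ - γ * r ^ (γ - 1) * (ρ - r) := by
    nlinarith [hA, hB, hC]
  -- ρ^γ ≥ K
  have hKρ : K ≤ ρ ^ γ := by
    rw [hK_def]
    exact rpow_le_rpow (by linarith) (by linarith) (by linarith)
  have h1ρ : 1 + ρ ^ γ ≤ (K + 1) / K * ρ ^ γ := by
    rw [div_mul_eq_mul_div, le_div_iff₀ hKpos]
    nlinarith
  -- finish
  rw [hH ρ, hH r]
  have hfin : a * δ / (γ - 1) * (K / (K + 1)) * (1 + ρ ^ γ)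
      ≤ a * δ / (γ - 1) * ρ ^ γ := by
    have h1 : a * δ / (γ - 1) * (K / (K + 1)) * (1 + ρ ^ γ)
        ≤ a * δ / (γ - 1) * (K / (K + 1)) * ((K + 1) / K * ρ ^ γ) := by
      apply mul_le_mul_of_nonneg_left h1ρ (by positivity)
    calc a * δ / (γ - 1) * (K / (K + 1)) * (1 + ρ ^ γ)
        ≤ a * δ / (γ - 1) * (K / (K + 1)) * ((K + 1) / K * ρ ^ γ) := h1
      _ = a * δ / (γ - 1) * ρ ^ γ := by field_simp
  refine hfin.trans ?_
  have := mul_le_mul_of_nonneg_left hcore (le_of_lt (by positivity : (0:ℝ) < a / (γ - 1)))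
  calc a * δ / (γ - 1) * ρ ^ γ = a / (γ - 1) * (δ * ρ ^ γ) := by ring
    _ ≤ a / (γ - 1) * (ρ ^ γ - r ^ γ - γ * r ^ (γ - 1) * (ρ - r)) := this
    _ = a * ρ ^ γ / (γ - 1) - a * r ^ γ / (γ - 1) - a * γ * r ^ (γ - 1) / (γ - 1) * (ρ - r) := by
        field_simp
end

section
/- Let a > 0, γ > 1, and let 0 < r₁ ≤ r₂. Then for every ε > 0 there exists a constant C > 0 such that for all ρ ≥ 0, all r ∈ [r₁, r₂], and all s ≥ 0, one has |ρ − r| · s ≤ ε s² + C ( ρ s² + E(ρ|r) ), where E(ρ|r) = H(ρ) − H(r) − H′(r)(ρ − r) is the relative entropy. -/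
open Real

lemma my_tangent {p : ℝ} (hp : 1 ≤ p) {m t : ℝ} (hm : 0 < m) (ht : 0 ≤ t) :
    m ^ p + p * m ^ (p - 1) * (t - m) ≤ t ^ p := by
  have hs : (-1 : ℝ) ≤ t / m - 1 := by
    have : 0 ≤ t / m := div_nonneg ht hm.le
    linarith
  have hb := one_add_mul_self_le_rpow_one_add hs hp
  have h1 : (1 : ℝ) + (t / m - 1) = t / m := by ring
  rw [h1, div_rpow ht hm.le] at hb
  have hmp : (0 : ℝ) < m ^ p := rpow_pos_of_pos hm p
  have h2 : m ^ (p - 1) = m ^ p / m := by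
    rw [rpow_sub hm, rpow_one]
  have := mul_le_mul_of_nonneg_left hb hmp.le
  rw [mul_div_cancel₀ _ hmp.ne'] at this
  calc m ^ p + p * m ^ (p - 1) * (t - m)
      = m ^ p * (1 + p * (t / m - 1)) := by
        rw [h2]; field_simp
    _ ≤ t ^ p := this

/-- Tangent line inequality for `t ^ p`, concave case `0 < p ≤ 1`. -/

lemma my_tangent' {p : ℝ} (hp0 : 0 ≤ p) (hp : p ≤ 1) {m t : ℝ} (hm : 0 < m) (ht : 0 ≤ t) :
    t ^ p ≤ m ^ p + p * m ^ (p - 1) * (t - m) := by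
  have hs : (-1 : ℝ) ≤ t / m - 1 := by
    have : 0 ≤ t / m := div_nonneg ht hm.le
    linarith
  have hb := rpow_one_add_le_one_add_mul_self hs hp0 hp
  have h1 : (1 : ℝ) + (t / m - 1) = t / m := by ring
  rw [h1, div_rpow ht hm.le] at hb
  have hmp : (0 : ℝ) < m ^ p := rpow_pos_of_pos hm p
  have h2 : m ^ (p - 1) = m ^ p / m := by
    rw [rpow_sub hm, rpow_one]
  have := mul_le_mul_of_nonneg_left hb hmp.le
  rw [mul_div_cancel₀ _ hmp.ne'] at this
  calc t ^ p ≤ m ^ p * (1 + p * (t / m - 1)) := this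
    _ = m ^ p + p * m ^ (p - 1) * (t - m) := by rw [h2]; field_simp

lemma my_mv {p u v x y : ℝ} (hp : 0 < p) (hu : 0 < u) (hux : u ≤ x) (hxy : x ≤ y)
    (hyv : y ≤ v) :
    p * min (u ^ (p - 1)) (v ^ (p - 1)) * (y - x) ≤ y ^ p - x ^ p := by
  have hx : 0 < x := hu.trans_le hux
  have hy : 0 < y := hx.trans_le hxy
  rcases le_or_gt 1 p with h1 | h1
  · have ht := my_tangent h1 hx hy.le
    have hmin : min (u ^ (p - 1)) (v ^ (p - 1)) ≤ x ^ (p - 1) :=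
      (min_le_left _ _).trans (rpow_le_rpow hu.le hux (by linarith))
    have := mul_le_mul_of_nonneg_right (mul_le_mul_of_nonneg_left hmin hp.le)
      (sub_nonneg.2 hxy)
    linarith
  · have ht := my_tangent' hp.le h1.le hy hx.le
    have hmin : min (u ^ (p - 1)) (v ^ (p - 1)) ≤ y ^ (p - 1) :=
      (min_le_right _ _).trans (rpow_le_rpow_of_nonpos hy hyv (by linarith))
    have := mul_le_mul_of_nonneg_right (mul_le_mul_of_nonneg_left hmin hp.le)
      (sub_nonneg.2 hxy)
    nlinarith

lemma my_quad {γ r₁ r₂ M ρ r : ℝ} (hγ : 1 < γ) (hr₁ : 0 < r₁) (hrl : r₁ ≤ r)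
    (hrr : r ≤ r₂) (hr₂M : r₂ ≤ M) (hρ0 : 0 ≤ ρ) (hρM : ρ ≤ M) :
    γ / 4 * ((γ - 1) * min ((r₁ / 2) ^ (γ - 1 - 1)) (M ^ (γ - 1 - 1))) * (ρ - r) ^ 2
      ≤ ρ ^ γ - r ^ γ - γ * r ^ (γ - 1) * (ρ - r) := by
  have hr : 0 < r := hr₁.trans_le hrl
  have hm : 0 < (ρ + r) / 2 := by linarith
  have hγ0 : (0 : ℝ) < γ := by linarith
  have h1 := my_tangent hγ.le hm hρ0
  have h2 := my_tangent hγ.le hr hm.le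
  have hm1 : ρ - (ρ + r) / 2 = (ρ - r) / 2 := by ring
  have hm2 : (ρ + r) / 2 - r = (ρ - r) / 2 := by ring
  rw [hm1] at h1
  rw [hm2] at h2
  rcases le_total r ρ with hc | hc
  · have h3 := my_mv (p := γ - 1) (u := r₁ / 2) (v := M) (by linarith) (by linarith)
      (show r₁ / 2 ≤ r by linarith) (show r ≤ (ρ + r) / 2 by linarith)
      (show (ρ + r) / 2 ≤ M by linarith)
    rw [hm2] at h3
    have h4 := mul_le_mul_of_nonneg_right h3
      (show 0 ≤ γ * ((ρ - r) / 2) by nlinarith)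
    nlinarith [h1, h2, h4]
  · have h3 := my_mv (p := γ - 1) (u := r₁ / 2) (v := M) (by linarith) (by linarith)
      (show r₁ / 2 ≤ (ρ + r) / 2 by linarith) (show (ρ + r) / 2 ≤ r by linarith)
      (show r ≤ M by linarith)
    have hm3 : r - (ρ + r) / 2 = (r - ρ) / 2 := by ring
    rw [hm3] at h3
    have h4 := mul_le_mul_of_nonneg_right h3
      (show 0 ≤ γ * ((r - ρ) / 2) by nlinarith)
    nlinarith [h1, h2, h4]

lemma my_lin {γ r₂ ρ r : ℝ} (hγ : 1 < γ) (hr : 0 < r) (hrr : r ≤ r₂)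
    (hρ : (2 * γ) ^ (γ - 1)⁻¹ * r₂ ≤ ρ) :
    γ * r₂ ^ (γ - 1) * ρ ≤ ρ ^ γ - r ^ γ - γ * r ^ (γ - 1) * (ρ - r) := by
  have hr₂ : 0 < r₂ := hr.trans_le hrr
  have hγ0 : (0 : ℝ) < γ := by linarith
  have hμ : (1 : ℝ) ≤ (2 * γ) ^ (γ - 1)⁻¹ := by
    calc (1 : ℝ) = 1 ^ (γ - 1)⁻¹ := (one_rpow _).symm
    _ ≤ (2 * γ) ^ (γ - 1)⁻¹ :=
        rpow_le_rpow zero_le_one (by linarith) (inv_nonneg.mpr (by linarith))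
  have hMρ : r₂ ≤ ρ := le_trans (le_mul_of_one_le_left hr₂.le hμ) hρ
  have hρ0 : 0 < ρ := hr₂.trans_le hMρ
  have hMp : ((2 * γ) ^ (γ - 1)⁻¹ * r₂) ^ (γ - 1) = 2 * γ * r₂ ^ (γ - 1) := by
    rw [mul_rpow (by positivity) hr₂.le, rpow_inv_rpow (by positivity) (show (0:ℝ) < γ - 1 by linarith).ne']
  have hρp : 2 * γ * r₂ ^ (γ - 1) ≤ ρ ^ (γ - 1) := by
    rw [← hMp]
    exact rpow_le_rpow (by positivity) hρ (by linarith)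
  have hsplit : ρ ^ γ = ρ ^ (γ - 1) * ρ := by
    rw [← Real.rpow_add_one hρ0.ne' (γ - 1)]; norm_num
  have hrs : r ^ (γ - 1) * r = r ^ γ := by
    rw [← Real.rpow_add_one hr.ne' (γ - 1)]; norm_num
  have hrpow : r ^ (γ - 1) ≤ r₂ ^ (γ - 1) := rpow_le_rpow hr.le hrr (by linarith)
  have hrγ : 0 < r ^ γ := rpow_pos_of_pos hr γ
  have h1 : 2 * γ * r₂ ^ (γ - 1) * ρ ≤ ρ ^ (γ - 1) * ρ :=
    mul_le_mul_of_nonneg_right hρp hρ0.le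
  have h2 : γ * r ^ (γ - 1) * ρ ≤ γ * r₂ ^ (γ - 1) * ρ :=
    mul_le_mul_of_nonneg_right (mul_le_mul_of_nonneg_left hrpow hγ0.le) hρ0.le
  nlinarith [h1, h2, hrγ, hrs, hsplit]

/-- Quadratic regime branch, with all quantities abstract. -/
lemma my_branch1 {ε b cB C F ρ r s : ℝ} (hε : 0 < ε) (hb : 0 < b) (hcB0 : 0 < cB)
    (hC : 1 / (4 * ε * b * cB) ≤ C) (hC0 : 0 < C) (hρ0 : 0 ≤ ρ) (hs : 0 ≤ s)
    (hq : cB * (ρ - r) ^ 2 ≤ F) :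
    |ρ - r| * s ≤ ε * s ^ 2 + C * (ρ * s ^ 2 + b * F) := by
  have hF0 : 0 ≤ F := le_trans (mul_nonneg hcB0.le (sq_nonneg _)) hq
  have habs : |ρ - r| ^ 2 = (ρ - r) ^ 2 := sq_abs _
  have hεs : 4 * ε * (|ρ - r| * s) ≤ 4 * ε * (ε * s ^ 2) + (ρ - r) ^ 2 := by
    nlinarith [sq_nonneg (2 * ε * s - |ρ - r|)]
  have h6 : b * (cB * (ρ - r) ^ 2) ≤ b * F := mul_le_mul_of_nonneg_left hq hb.le
  have h7 : (ρ - r) ^ 2 ≤ 4 * ε * C * (b * F) := by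
    have e1 : (ρ - r) ^ 2 = 4 * ε * (1 / (4 * ε * b * cB)) * (b * (cB * (ρ - r) ^ 2)) := by
      field_simp
    have e2 : 4 * ε * (1 / (4 * ε * b * cB)) * (b * (cB * (ρ - r) ^ 2))
        ≤ 4 * ε * (1 / (4 * ε * b * cB)) * (b * F) :=
      mul_le_mul_of_nonneg_left h6 (by positivity)
    have e3 : 4 * ε * (1 / (4 * ε * b * cB)) * (b * F) ≤ 4 * ε * C * (b * F) := by
      apply mul_le_mul_of_nonneg_right _ (mul_nonneg hb.le hF0)
      exact mul_le_mul_of_nonneg_left hC (by positivity)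
    linarith [e1.le, e2, e3]
  have h8 : 0 ≤ 4 * ε * (C * (ρ * s ^ 2)) := by positivity
  have final : (4 * ε) * (|ρ - r| * s) ≤ (4 * ε) * (ε * s ^ 2 + C * (ρ * s ^ 2 + b * F)) := by
    linarith [hεs, h7, h8]
  exact le_of_mul_le_mul_left final (by positivity)

/-- Linear regime branch, with all quantities abstract. -/
lemma my_branch2 {ε b cA C F ρ r s : ℝ} (hε : 0 < ε) (hb : 0 < b) (hcA0 : 0 < cA)
    (hC : 1 / (2 * b * cA) ≤ C) (hC1 : 1 ≤ C) (hρ0 : 0 ≤ ρ) (hr0 : 0 ≤ r) (hrρ : r ≤ ρ)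
    (hs : 0 ≤ s) (hl : cA * ρ ≤ F) :
    |ρ - r| * s ≤ ε * s ^ 2 + C * (ρ * s ^ 2 + b * F) := by
  have hF0 : 0 ≤ F := le_trans (mul_nonneg hcA0.le hρ0) hl
  have habs : |ρ - r| = ρ - r := abs_of_nonneg (by linarith)
  have h1 : (ρ - r) * s ≤ ρ * s := mul_le_mul_of_nonneg_right (by linarith) hs
  have h2 : ρ * s ≤ ρ * ((s ^ 2 + 1) / 2) := by
    have hss : s ≤ (s ^ 2 + 1) / 2 := by nlinarith [sq_nonneg (s - 1)]
    exact mul_le_mul_of_nonneg_left hss hρ0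
  have h6 : b * (cA * ρ) ≤ b * F := mul_le_mul_of_nonneg_left hl hb.le
  have h7 : ρ / 2 ≤ C * (b * F) := by
    have e1 : ρ / 2 = 1 / (2 * b * cA) * (b * (cA * ρ)) := by field_simp
    have e2 : 1 / (2 * b * cA) * (b * (cA * ρ)) ≤ 1 / (2 * b * cA) * (b * F) :=
      mul_le_mul_of_nonneg_left h6 (by positivity)
    have e3 : 1 / (2 * b * cA) * (b * F) ≤ C * (b * F) :=
      mul_le_mul_of_nonneg_right hC (mul_nonneg hb.le hF0)
    linarith [e1.le, e2, e3]
  have h8 : ρ * s ^ 2 / 2 ≤ C * (ρ * s ^ 2) := by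
    have h9 : 0 ≤ ρ * s ^ 2 := by positivity
    nlinarith
  have h10 : 0 ≤ ε * s ^ 2 := by positivity
  rw [habs]
  nlinarith [h1, h2, h7, h8, h10]

/-- Cutoff estimate: for every `ε > 0` there is `C > 0` such that for all `ρ ≥ 0`,
`r ∈ [r₁, r₂]`, `s ≥ 0`: `|ρ - r| s ≤ ε s² + C (ρ s² + E(ρ|r))`, where
`E(ρ|r) = H(ρ) - H(r) - H'(r)(ρ - r)` with `H(ρ) = a ρ^γ/(γ-1)`. -/
theorem stmt4 (a γ r₁ r₂ : ℝ) (ha : 0 < a) (hγ : 1 < γ)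
    (hr₁ : 0 < r₁) (hr₁₂ : r₁ ≤ r₂)
    (H : ℝ → ℝ) (hH : ∀ ρ : ℝ, H ρ = a * ρ ^ γ / (γ - 1)) :
    ∀ ε > 0, ∃ C > 0, ∀ ρ : ℝ, 0 ≤ ρ → ∀ r ∈ Set.Icc r₁ r₂, ∀ s : ℝ, 0 ≤ s →
      |ρ - r| * s ≤ ε * s ^ 2
        + C * (ρ * s ^ 2 + (H ρ - H r - (a * γ * r ^ (γ - 1) / (γ - 1)) * (ρ - r))) := by
  intro ε hε
  have hγ1 : (0 : ℝ) < γ - 1 := by linarith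
  have hγ0 : (0 : ℝ) < γ := by linarith
  have hr₂ : (0 : ℝ) < r₂ := hr₁.trans_le hr₁₂
  obtain ⟨M, hM⟩ : ∃ M, M = (2 * γ) ^ (γ - 1)⁻¹ * r₂ := ⟨_, rfl⟩
  have hμ : (1 : ℝ) ≤ (2 * γ) ^ (γ - 1)⁻¹ := by
    calc (1 : ℝ) = 1 ^ (γ - 1)⁻¹ := (one_rpow _).symm
    _ ≤ (2 * γ) ^ (γ - 1)⁻¹ :=
        rpow_le_rpow zero_le_one (by linarith) (inv_nonneg.mpr hγ1.le)
  have hr₂M : r₂ ≤ M := by rw [hM]; exact le_mul_of_one_le_left hr₂.le hμ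
  obtain ⟨b, hbdef⟩ : ∃ b, b = a / (γ - 1) := ⟨_, rfl⟩
  have hb : 0 < b := hbdef ▸ div_pos ha hγ1
  obtain ⟨cB, hcBdef⟩ : ∃ cB,
      cB = γ / 4 * ((γ - 1) * min ((r₁ / 2) ^ (γ - 1 - 1)) (M ^ (γ - 1 - 1))) := ⟨_, rfl⟩
  have hcB0 : 0 < cB := by
    have h1 : (0 : ℝ) < (r₁ / 2) ^ (γ - 1 - 1) := rpow_pos_of_pos (by linarith) _
    have h2 : (0 : ℝ) < M ^ (γ - 1 - 1) := rpow_pos_of_pos (by linarith) _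
    have h3 := lt_min h1 h2
    rw [hcBdef]; positivity
  obtain ⟨cA, hcAdef⟩ : ∃ cA, cA = γ * r₂ ^ (γ - 1) := ⟨_, rfl⟩
  have hcA0 : 0 < cA := by
    have := rpow_pos_of_pos hr₂ (γ - 1); rw [hcAdef]; positivity
  obtain ⟨C, hCdef⟩ : ∃ C, C = 1 + 1 / (4 * ε * b * cB) + 1 / (2 * b * cA) := ⟨_, rfl⟩
  have hK1 : 0 < 1 / (4 * ε * b * cB) := by positivity
  have hK2 : 0 < 1 / (2 * b * cA) := by positivity
  have hC1 : 1 ≤ C := by rw [hCdef]; linarith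
  have hC0 : 0 < C := by linarith
  refine ⟨C, hC0, ?_⟩
  intro ρ hρ0 r hr s hs
  obtain ⟨hrl, hrr⟩ := hr
  have hr0 : 0 < r := hr₁.trans_le hrl
  obtain ⟨F, hFdef⟩ : ∃ F, F = ρ ^ γ - r ^ γ - γ * r ^ (γ - 1) * (ρ - r) := ⟨_, rfl⟩
  have hE : H ρ - H r - a * γ * r ^ (γ - 1) / (γ - 1) * (ρ - r) = b * F := by
    rw [hH, hH, hFdef, hbdef]
    field_simp
  rw [hE]
  rcases le_or_gt ρ M with hcase | hcase
  · have hq : cB * (ρ - r) ^ 2 ≤ F := by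
      rw [hcBdef, hFdef]; exact my_quad hγ hr₁ hrl hrr hr₂M hρ0 hcase
    exact my_branch1 hε hb hcB0 (by rw [hCdef]; linarith) hC0 hρ0 hs hq
  · have hl : cA * ρ ≤ F := by
      rw [hcAdef, hFdef]
      exact my_lin hγ hr0 hrr (by rw [← hM]; exact hcase.le)
    have hrρ : r ≤ ρ := le_trans (le_trans hrr hr₂M) hcase.le
    exact my_branch2 hε hb hcA0 (by rw [hCdef]; linarith) hC1 hρ0 hr0.le hrρ hs hl
end

section
/- Let V be a real inner product space, let Δt > 0, let ρ, ρ' be real numbers and u, u' ∈ V. Then ⟨(ρ u − ρ' u')/Δt, u⟩ − ((ρ − ρ')/Δt) · (‖u‖²/2) = (ρ ‖u‖² − ρ' ‖u'‖²)/(2 Δt) + (Δt/2) · ρ' · ‖(u − u')/Δt‖². -/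
open scoped RealInnerProductSpace

/-- Discrete kinetic energy identity:
`⟨(ρ u − ρ' u')/Δt, u⟫ − ((ρ − ρ')/Δt)·(‖u‖²/2)
  = (ρ‖u‖² − ρ'‖u'‖²)/(2Δt) + (Δt/2)·ρ'·‖(u − u')/Δt‖²`. -/
theorem stmt5 {V : Type*} [NormedAddCommGroup V] [InnerProductSpace ℝ V]
    (Δt : ℝ) (hΔt : 0 < Δt) (ρ ρ' : ℝ) (u u' : V) :
    ⟪Δt⁻¹ • (ρ • u - ρ' • u'), u⟫ - (ρ - ρ') / Δt * (‖u‖ ^ 2 / 2)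
      = (ρ * ‖u‖ ^ 2 - ρ' * ‖u'‖ ^ 2) / (2 * Δt)
        + Δt / 2 * ρ' * ‖Δt⁻¹ • (u - u')‖ ^ 2 := by
  have h1 : ‖u - u'‖ ^ 2 = ‖u‖ ^ 2 - 2 * ⟪u, u'⟫ + ‖u'‖ ^ 2 := by
    rw [@norm_sub_sq_real]
  have h2 : ⟪u', u⟫ = ⟪u, u'⟫ := real_inner_comm _ _
  have hu : ⟪u, u⟫ = ‖u‖ ^ 2 := by rw [real_inner_self_eq_norm_sq]
  rw [inner_smul_left, inner_sub_left, inner_smul_left, inner_smul_left,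
    norm_smul, norm_inv, Real.norm_eq_abs, abs_of_pos hΔt]
  simp only [RCLike.ofReal_real_eq_id, id, map_inv₀, conj_trivial]
  rw [hu, h2, mul_pow, h1]
  field_simp
  ring
end

section
/- Let V be a real inner product space, let κ ≥ 0 and u_σ ∈ ℝ be real numbers, let ρ_in, ρ_out ∈ ℝ and û_in, û_out ∈ V. Define the upwind values ρ_up = ρ_in and û_up = û_in if u_σ ≥ 0, and ρ_up = ρ_out, û_up = û_out if u_σ < 0. Then ⟨ u_σ ρ_up û_up − κ (ρ_out û_out − ρ_in û_in), û_out − û_in ⟩ − ( u_σ ρ_up − κ(ρ_out − ρ_in) ) · (‖û_out‖² − ‖û_in‖²)/2 = − ( (1/2) ρ_up |u_σ| + κ (ρ_out + ρ_in)/2 ) · ‖û_out − û_in‖². -/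
/-! The flux splits into a convective part, `ρ_up` times `u_σ (⟨û_up, [û]⟩ − [‖û‖²/2])`, and a
diffusive part, `−κ (⟨[ρ û], [û]⟩ − [ρ] [‖û‖²/2])`; both reduce to `‖[û]‖²` by the polarization
identity `‖b − a‖² = ‖b‖² − 2⟨a, b⟩ + ‖a‖²`. -/

open scoped RealInnerProductSpace

section UpwindFlux

variable {V : Type*} [NormedAddCommGroup V] [InnerProductSpace ℝ V]

theorem inner_sub_sub_half_norm_sq_sub_left (a b : V) :
    ⟪a, b - a⟫ - (‖b‖ ^ 2 - ‖a‖ ^ 2) / 2 = -(‖b - a‖ ^ 2 / 2) := by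
  rw [inner_sub_right, real_inner_self_eq_norm_sq, norm_sub_sq_real, real_inner_comm]
  ring

theorem inner_sub_sub_half_norm_sq_sub_right (a b : V) :
    ⟪b, b - a⟫ - (‖b‖ ^ 2 - ‖a‖ ^ 2) / 2 = ‖b - a‖ ^ 2 / 2 := by
  rw [inner_sub_right, real_inner_self_eq_norm_sq, norm_sub_sq_real]
  ring

/-- Upwinding is what makes the convective part dissipative: the value is taken on the side
the velocity `u` comes from, which turns the sign of `u` into `|u|`. -/
theorem mul_inner_upwind_sub_half_norm_sq_sub (u : ℝ) (a b : V) :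
    u * (⟪if 0 ≤ u then a else b, b - a⟫ - (‖b‖ ^ 2 - ‖a‖ ^ 2) / 2)
      = -(|u| * ‖b - a‖ ^ 2 / 2) := by
  split_ifs with hu
  · rw [inner_sub_sub_half_norm_sq_sub_left, abs_of_nonneg hu]
    ring
  · rw [inner_sub_sub_half_norm_sq_sub_right, abs_of_neg (not_le.mp hu)]
    ring

theorem inner_smul_sub_smul_sub_mul_half_norm_sq_sub (r s : ℝ) (a b : V) :
    ⟪s • b - r • a, b - a⟫ - (s - r) * ((‖b‖ ^ 2 - ‖a‖ ^ 2) / 2)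
      = (s + r) / 2 * ‖b - a‖ ^ 2 := by
  simp only [inner_sub_left, inner_sub_right, real_inner_smul_left, real_inner_self_eq_norm_sq,
    norm_sub_sq_real, real_inner_comm a b]
  ring

end UpwindFlux

theorem stmt6_general {V : Type*} [NormedAddCommGroup V] [InnerProductSpace ℝ V]
    (κ uσ : ℝ) (ρin ρout : ℝ) (uin uout : V)
    (ρup : ℝ) (uup : V)
    (huup : uup = if 0 ≤ uσ then uin else uout) :
    ⟪uσ • (ρup • uup) - κ • (ρout • uout - ρin • uin), uout - uin⟫
        - (uσ * ρup - κ * (ρout - ρin)) * ((‖uout‖ ^ 2 - ‖uin‖ ^ 2) / 2)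
      = -((1 / 2) * ρup * |uσ| + κ * (ρout + ρin) / 2) * ‖uout - uin‖ ^ 2 := by
  have convective := mul_inner_upwind_sub_half_norm_sq_sub uσ uin uout
  have diffusive := inner_smul_sub_smul_sub_mul_half_norm_sq_sub ρin ρout uin uout
  rw [← huup] at convective
  rw [inner_sub_left, real_inner_smul_left, real_inner_smul_left, real_inner_smul_left]
  linear_combination ρup * convective - κ * diffusive

/-- Single-face upwind flux identity:
`⟨u_σ ρ_up û_up − κ(ρ_out û_out − ρ_in û_in), û_out − û_in⟩
  − (u_σ ρ_up − κ(ρ_out − ρ_in))·(‖û_out‖² − ‖û_in‖²)/2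
  = −((1/2) ρ_up |u_σ| + κ (ρ_out + ρ_in)/2)·‖û_out − û_in‖²`,
where the upwind values are taken from the `in` side if `u_σ ≥ 0`
and from the `out` side otherwise. -/
theorem stmt6 {V : Type*} [NormedAddCommGroup V] [InnerProductSpace ℝ V]
    (κ uσ : ℝ) (hκ : 0 ≤ κ) (ρin ρout : ℝ) (uin uout : V)
    (ρup : ℝ) (uup : V)
    (hρup : ρup = if 0 ≤ uσ then ρin else ρout)
    (huup : uup = if 0 ≤ uσ then uin else uout) :
    ⟪uσ • (ρup • uup) - κ • (ρout • uout - ρin • uin), uout - uin⟫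
        - (uσ * ρup - κ * (ρout - ρin)) * ((‖uout‖ ^ 2 - ‖uin‖ ^ 2) / 2)
      = -((1 / 2) * ρup * |uσ| + κ * (ρout + ρin) / 2) * ‖uout - uin‖ ^ 2 :=
  stmt6_general κ uσ ρin ρout uin uout ρup uup huup
end
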